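/- Let y : ℕⁿ → ℝ be such that M_d(y) is positive definite, and suppose the associated orthonormal polynomials (p_α)_{|α| ≤ d} all have full triangular form, p_α = Σ_{γ ≤ α} ρ_{αγ} X^γ. Then the entries of the inverse moment matrix are given by (M_d(y)⁻¹)(α,β) = Σ_γ ρ_{γα} ρ_{γβ}, where the sum runs over all multi-indices γ with |γ| ≤ d and max(α,β) ≤ γ in the FG order. In particular, if no such γ exists (i.e., |max(α,β)| > d), the entry is zero. -/

import Mathlib

open scoped BigOperators
open MvPolynomial Matrix

namespace Paper

/-- Total degree `|α|` of a multi-index `α`. -/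
def degSum {n : ℕ} (α : Fin n → ℕ) : ℕ := ∑ i, α i

lemma apply_le_degSum {n : ℕ} (α : Fin n → ℕ) (i : Fin n) : α i ≤ degSum α :=
  Finset.single_le_sum (fun _ _ => Nat.zero_le _) (Finset.mem_univ i)

noncomputable instance midxFintype (n d : ℕ) : Fintype {α : Fin n → ℕ // degSum α ≤ d} :=
  Fintype.ofInjective
    (fun a => (fun i => (⟨a.1 i, Nat.lt_succ_of_le (le_trans (apply_le_degSum a.1 i) a.2)⟩ :
        Fin (d+1))))
    (fun a b h => Subtype.ext (funext fun i => congrArg Fin.val (congrFun h i)))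

/-- The index set of the truncated moment matrix: multi-indices of total degree at most `d`. -/
abbrev MIdx (n d : ℕ) := {α : Fin n → ℕ // degSum α ≤ d}

/-- The truncated moment matrix `M_d(y)`. -/
def momMat (n d : ℕ) (y : (Fin n → ℕ) → ℝ) : Matrix (MIdx n d) (MIdx n d) ℝ :=
  Matrix.of fun a b => y (a.1 + b.1)

/-- The Riesz functional `L_y` on multivariate polynomials. -/
noncomputable def Ly {n : ℕ} (y : (Fin n → ℕ) → ℝ) (p : MvPolynomial (Fin n) ℝ) : ℝ :=
  ∑ m ∈ p.support, p.coeff m * y (fun i => m i)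

/-- The monomial `X^α`. -/
noncomputable def mono {n : ℕ} (α : Fin n → ℕ) : MvPolynomial (Fin n) ℝ := ∏ i, X i ^ α i

/-- The coefficient of `X^γ` in `p`. -/
noncomputable def coeffOf {n : ℕ} (p : MvPolynomial (Fin n) ℝ) (γ : Fin n → ℕ) : ℝ :=
  p.coeff (Finsupp.equivFunOnFinite.symm γ)

/-- Strict lexicographic order on multi-indices. -/
def lexLT {n : ℕ} (α β : Fin n → ℕ) : Prop :=
  ∃ i, (∀ j, j < i → α j = β j) ∧ α i < β i

/-- Strict graded lexicographic (GLex) order on multi-indices. -/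
def glexLT {n : ℕ} (α β : Fin n → ℕ) : Prop :=
  degSum α < degSum β ∨ (degSum α = degSum β ∧ lexLT α β)

/-- Graded lexicographic order (reflexive version). -/
def glexLE {n : ℕ} (α β : Fin n → ℕ) : Prop := glexLT α β ∨ α = β

/-- The product form (independence) property of `M_d(y)`:
`L_y(X^α) = ∏_i L_y(X_i^{α_i})` for all `|α| ≤ 2d`. -/
def ProductForm (n d : ℕ) (y : (Fin n → ℕ) → ℝ) : Prop :=
  ∀ α : Fin n → ℕ, degSum α ≤ 2*d → y α = ∏ i, y (Pi.single i (α i))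

/-- The family of orthonormal polynomials `(p_α)_{|α| ≤ d}` associated with `y`:
GLex-triangular, orthonormal, orthogonal to lower monomials, positive leading term. -/
structure IsONFamily (n d : ℕ) (y : (Fin n → ℕ) → ℝ)
    (p : (Fin n → ℕ) → MvPolynomial (Fin n) ℝ) : Prop where
  span : ∀ α, degSum α ≤ d → ∀ γ : Fin n → ℕ, coeffOf (p α) γ ≠ 0 → glexLE γ α
  orth : ∀ α β, degSum α ≤ d → degSum β ≤ d →
    Ly y (p α * p β) = if α = β then 1 else 0
  lower : ∀ α β, degSum α ≤ d → degSum β ≤ d → glexLT β α → Ly y (p α * mono β) = 0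
  pos : ∀ α, degSum α ≤ d → 0 < Ly y (p α * mono α)



section Aux

variable {n d : ℕ}

lemma Ly_sum (y : (Fin n → ℕ) → ℝ) (q : MvPolynomial (Fin n) ℝ) :
    Ly y q = (AddMonoidAlgebra.coeff q).sum (fun m c => c * y ⇑m) := rfl

lemma Ly_add (y : (Fin n → ℕ) → ℝ) (q r : MvPolynomial (Fin n) ℝ) :
    Ly y (q + r) = Ly y q + Ly y r := by
  simp only [Ly_sum, AddMonoidAlgebra.coeff_add]
  exact Finsupp.sum_add_index' (fun m => by simp) (fun m c c' => by ring)

lemma Ly_monomial (y : (Fin n → ℕ) → ℝ) (m : Fin n →₀ ℕ) (c : ℝ) :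
    Ly y (MvPolynomial.monomial m c) = c * y ⇑m := by
  classical
  by_cases hc : c = 0
  · simp [Ly, hc]
  · simp [Ly, support_monomial, hc, coeff_monomial]

noncomputable def LyHom (y : (Fin n → ℕ) → ℝ) : MvPolynomial (Fin n) ℝ →+ ℝ where
  toFun := Ly y
  map_zero' := by simp [Ly]
  map_add' := Ly_add y

lemma Ly_mul (y : (Fin n → ℕ) → ℝ) (q r : MvPolynomial (Fin n) ℝ) :
    Ly y (q * r) = ∑ m ∈ q.support, ∑ m' ∈ r.support,
      q.coeff m * r.coeff m' * y (⇑m + ⇑m') := by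
  classical
  conv_lhs => rw [q.as_sum, r.as_sum]
  rw [Finset.sum_mul_sum, show Ly y = LyHom y from rfl, map_sum]
  refine Finset.sum_congr rfl fun m _ => by
    rw [map_sum]
    refine Finset.sum_congr rfl fun m' _ => ?_
    rw [monomial_mul, show (LyHom y : _ → ℝ) = Ly y from rfl, Ly_monomial]
    simp

lemma coeffOf_coe (q : MvPolynomial (Fin n) ℝ) (m : Fin n →₀ ℕ) :
    coeffOf q ⇑m = q.coeff m := by
  simp [coeffOf]

lemma degSum_le_of_glexLE {γ α : Fin n → ℕ} (h : glexLE γ α) : degSum γ ≤ degSum α := by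
  rcases h with (h | rfl)
  · rcases h with h | ⟨h, _⟩
    · exact h.le
    · exact h.le
  · exact le_rfl

/-- Converting a sum over the support of a polynomial of degree ≤ d into a sum over `MIdx n d`. -/
lemma sum_support_eq (q : MvPolynomial (Fin n) ℝ)
    (hq : ∀ m ∈ q.support, degSum (⇑m : Fin n → ℕ) ≤ d) (f : (Fin n → ℕ) → ℝ) :
    ∑ m ∈ q.support, q.coeff m * f ⇑m = ∑ a : MIdx n d, coeffOf q a.1 * f a.1 := by
  classical
  set e : MIdx n d ↪ (Fin n →₀ ℕ) :=
    ⟨fun a => Finsupp.equivFunOnFinite.symm a.1,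
     fun a b h => Subtype.ext (by
       simpa using congrArg (⇑Finsupp.equivFunOnFinite) h)⟩ with he
  have hcoe : ∀ a : MIdx n d, ⇑(e a) = a.1 := fun a =>
    Finsupp.equivFunOnFinite.apply_symm_apply a.1
  have h2 : (∑ a : MIdx n d, coeffOf q a.1 * f a.1)
      = ∑ m ∈ Finset.univ.map e, q.coeff m * f ⇑m := by
    rw [Finset.sum_map]
    refine Finset.sum_congr rfl fun a _ => ?_
    rw [hcoe, ← coeffOf_coe q (e a), hcoe]
  rw [h2]
  refine Finset.sum_subset ?_ ?_
  · intro m hm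
    refine Finset.mem_map.2 ⟨⟨⇑m, hq m hm⟩, Finset.mem_univ _, ?_⟩
    exact Finsupp.equivFunOnFinite.symm_apply_apply m
  · intro m _ hm
    rw [MvPolynomial.notMem_support_iff.1 hm, zero_mul]

end Aux

/-- **Formula (3.5).** If the orthonormal polynomials all have full triangular form, then
`(M_d(y)⁻¹)(α,β) = Σ_{max(α,β) ≤ γ, |γ| ≤ d} ρ_{γα} ρ_{γβ}`; in particular the entry is zero
when `|max(α,β)| > d`. -/
theorem stmt5 (n d : ℕ) (y : (Fin n → ℕ) → ℝ)
    (hpd : (momMat n d y).PosDef)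
    (p : (Fin n → ℕ) → MvPolynomial (Fin n) ℝ) (hp : IsONFamily n d y p)
    (htri : ∀ α γ : Fin n → ℕ, degSum α ≤ d → ¬ (∀ i, γ i ≤ α i) → coeffOf (p α) γ = 0)
    (a b : MIdx n d) :
    ((momMat n d y)⁻¹ a b =
      ∑ g : MIdx n d,
        if ∀ i, max (a.1 i) (b.1 i) ≤ g.1 i
        then coeffOf (p g.1) a.1 * coeffOf (p g.1) b.1 else 0) ∧
    (d < degSum (fun i => max (a.1 i) (b.1 i)) → (momMat n d y)⁻¹ a b = 0) := by
  classical
  -- support degree bounds for the orthonormal family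
  have hsupp : ∀ α : Fin n → ℕ, degSum α ≤ d → ∀ m ∈ (p α).support,
      degSum (⇑m : Fin n → ℕ) ≤ d := by
    intro α hα m hm
    have h0 : coeffOf (p α) ⇑m ≠ 0 := by
      rw [coeffOf_coe]; exact MvPolynomial.mem_support_iff.1 hm
    exact le_trans (degSum_le_of_glexLE (hp.span α hα ⇑m h0)) hα
  set R : Matrix (MIdx n d) (MIdx n d) ℝ :=
    Matrix.of fun g aa => coeffOf (p g.1) aa.1 with hR
  -- expansion of Ly of products
  have hexp : ∀ α β : MIdx n d, Ly y (p α.1 * p β.1)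
      = ∑ u : MIdx n d, ∑ v : MIdx n d,
          coeffOf (p α.1) u.1 * (momMat n d y u v * coeffOf (p β.1) v.1) := by
    intro α β
    rw [Ly_mul]
    have step1 : ∑ m ∈ (p α.1).support, ∑ m' ∈ (p β.1).support,
        (p α.1).coeff m * (p β.1).coeff m' * y (⇑m + ⇑m')
        = ∑ m ∈ (p α.1).support, (p α.1).coeff m *
            ((fun w => ∑ m' ∈ (p β.1).support, (p β.1).coeff m' * y (w + ⇑m')) ⇑m) := by
      refine Finset.sum_congr rfl fun m _ => ?_
      rw [Finset.mul_sum]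
      exact Finset.sum_congr rfl fun m' _ => by ring
    rw [step1, sum_support_eq (d := d) (p α.1) (hsupp α.1 α.2)
      (fun w => ∑ m' ∈ (p β.1).support, (p β.1).coeff m' * y (w + ⇑m'))]
    refine Finset.sum_congr rfl fun u _ => ?_
    have step2 : (∑ m' ∈ (p β.1).support, (p β.1).coeff m' * y (u.1 + ⇑m'))
        = ∑ v : MIdx n d, coeffOf (p β.1) v.1 * y (u.1 + v.1) :=
      sum_support_eq (d := d) _ (hsupp β.1 β.2) (fun w => y (u.1 + w))
    rw [step2, Finset.mul_sum]
    refine Finset.sum_congr rfl fun v _ => ?_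
    simp only [momMat, Matrix.of_apply]
    ring
  -- R * (M * Rᵀ) = 1
  have key : R * (momMat n d y * Rᵀ) = 1 := by
    ext α β
    rw [Matrix.mul_apply]
    simp only [Matrix.mul_apply, Matrix.transpose_apply, Finset.mul_sum]
    have : ∑ u : MIdx n d, ∑ v : MIdx n d,
        R α u * (momMat n d y u v * R β v)
        = Ly y (p α.1 * p β.1) := (hexp α β).symm
    rw [this, hp.orth α.1 β.1 α.2 β.2]
    by_cases h : α = β
    · simp [h, Matrix.one_apply]
    · have h' : α.1 ≠ β.1 := fun hh => h (Subtype.ext hh)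
      simp [Matrix.one_apply, h, h']
  -- hence M⁻¹ = Rᵀ * R
  have h2 : momMat n d y * (Rᵀ * R) = 1 := by
    have h3 : (momMat n d y * Rᵀ) * R = 1 := mul_eq_one_comm.mp key
    rwa [Matrix.mul_assoc] at h3
  have hinv : (momMat n d y)⁻¹ = Rᵀ * R := Matrix.inv_eq_right_inv h2
  have hmain : (momMat n d y)⁻¹ a b =
      ∑ g : MIdx n d,
        if ∀ i, max (a.1 i) (b.1 i) ≤ g.1 i
        then coeffOf (p g.1) a.1 * coeffOf (p g.1) b.1 else 0 := by
    rw [hinv, Matrix.mul_apply]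
    refine Finset.sum_congr rfl fun g _ => ?_
    by_cases h : ∀ i, max (a.1 i) (b.1 i) ≤ g.1 i
    · simp [h, hR, Matrix.transpose_apply]
    · push_neg at h
      obtain ⟨i, hi⟩ := h
      rw [if_neg (by push_neg; exact ⟨i, hi⟩)]
      rcases Nat.lt_or_ge (g.1 i) (a.1 i) with hlt | hge
      · have : coeffOf (p g.1) a.1 = 0 := htri g.1 a.1 g.2
          (fun hall => absurd (hall i) (Nat.not_le.2 hlt))
        simp [hR, Matrix.transpose_apply, this]
      · have hlt' : g.1 i < b.1 i := by
          rcases lt_max_iff.mp hi with h' | h'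
          · omega
          · exact h'
        have : coeffOf (p g.1) b.1 = 0 := htri g.1 b.1 g.2
          (fun hall => absurd (hall i) (Nat.not_le.2 hlt'))
        simp [hR, Matrix.transpose_apply, this]
  refine ⟨hmain, fun hdeg => ?_⟩
  rw [hmain]
  refine Finset.sum_eq_zero fun g _ => ?_
  rw [if_neg]
  intro hall
  have : degSum (fun i => max (a.1 i) (b.1 i)) ≤ degSum g.1 :=
    Finset.sum_le_sum fun i _ => hall i
  omega


end Paper
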